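/- Let G be a centerless group and A ⊆ G such that (G, A) is a special pair. Then the automorphism tower of G stabilizes and τ_G < (2^{max(|A|, ℵ₀)})⁺, the successor cardinal of 2^{max(|A|, ℵ₀)}. -/

import Mathlib

universe u

/-- The automorphism tower of a centerless group `G`: an ordinal-indexed increasing
continuous chain of groups, starting at `G`, where each successor stage is (identified
with) the automorphism group of the previous stage via the conjugation embedding. -/
structure AutTower (G : Type u) [Group G] where
  /-- the `o`-th stage `G^o` of the tower -/
  Stage : Ordinal.{u} → GrpCat.{u}
  /-- the inclusion maps of the tower -/
  map : ∀ ⦃o₁ o₂ : Ordinal.{u}⦄, o₁ ≤ o₂ → (↥(Stage o₁) →* ↥(Stage o₂))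
  map_id : ∀ (o : Ordinal.{u}) (x : ↥(Stage o)), map le_rfl x = x
  map_comp : ∀ ⦃o₁ o₂ o₃ : Ordinal.{u}⦄ (h₁ : o₁ ≤ o₂) (h₂ : o₂ ≤ o₃) (x : ↥(Stage o₁)),
      map h₂ (map h₁ x) = map (h₁.trans h₂) x
  map_injective : ∀ ⦃o₁ o₂ : Ordinal.{u}⦄ (h : o₁ ≤ o₂), Function.Injective (map h)
  /-- the identification of `G` with the `0`-th stage -/
  emb0 : G ≃* ↥(Stage 0)
  /-- the identification of the `(o+1)`-st stage with `Aut(G^o)` -/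
  succIso : ∀ o : Ordinal.{u}, ↥(Stage (o + 1)) ≃* MulAut ↥(Stage o)
  /-- under the above identification, the inclusion `G^o ≤ G^{o+1}` is `g ↦` conjugation by `g` -/
  succIso_map : ∀ (o : Ordinal.{u}) (x : ↥(Stage o)),
      succIso o (map (show o ≤ o + 1 from le_self_add) x) = MulAut.conj x
  /-- at limit stages the tower is continuous: `G^δ = ⋃_{α<δ} G^α` -/
  limit_covers : ∀ (o : Ordinal.{u}), Order.IsSuccLimit o → ∀ x : ↥(Stage o),
      ∃ (o' : Ordinal.{u}) (h : o' < o), x ∈ Set.range (map h.le)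

namespace AutTower

variable {G : Type u} [Group G]

/-- the embedding of `G` into the `o`-th stage of its automorphism tower -/
def embed (T : AutTower G) (o : Ordinal.{u}) : G →* ↥(T.Stage o) :=
  (T.map (show (0 : Ordinal.{u}) ≤ o by simp)).comp T.emb0.toMonoidHom

/-- `G^{o+1} = G^o`, i.e. the inclusion of stage `o` into stage `o+1` is onto -/
def StabilizesAt (T : AutTower G) (o : Ordinal.{u}) : Prop :=
  Function.Surjective (T.map (show o ≤ o + 1 from le_self_add))

end AutTower

section SpecialPair

variable {H : Type u} [Group H]

/-- There is a group isomorphism from `⟨A ∪ {x}⟩` onto `⟨A ∪ {y}⟩` fixing `A`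
pointwise and sending `x` to `y`. -/
def FixesAndSends (A : Set H) (x y : H) : Prop :=
  ∃ φ : ↥(Subgroup.closure (A ∪ {x})) ≃* ↥(Subgroup.closure (A ∪ {y})),
    (∀ g : ↥(Subgroup.closure (A ∪ {x})), (g : H) ∈ A → ((φ g : H) = (g : H))) ∧
    (∀ g : ↥(Subgroup.closure (A ∪ {x})), (g : H) = x → ((φ g : H) = y))

end SpecialPair

/-- `(G, A)` is a special pair: whenever there is an isomorphism from `⟨A ∪ {x}⟩`
onto `⟨A ∪ {y}⟩` fixing `A` pointwise and sending `x` to `y`, then `x = y`. -/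
def IsSpecialPair (H : Type u) [Group H] (A : Set H) : Prop :=
  ∀ x y : H, FixesAndSends A x y → x = y

/-!
Replace the special-pair condition by its kernel form: an element `x` is determined by the
relations it satisfies over `A`, i.e. by a subset of the free group on `A ⊕ {x}`, so
`|G| ≤ 2 ^ max(|A|, ℵ₀)`. This property passes to isomorphic copies, to unions of chains, and from
a centerless `H` to `Aut H` with `A` replaced by its inner automorphisms: since
`f ∘ conj a ∘ f⁻¹ = conj (f a)`, the relations of `f` over `conj '' A` determine those of each
`f a`, hence `f` on `A`, hence `f`. So every stage of the tower has size at most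
`κ = 2 ^ max(|A|, ℵ₀)`; a tower not stabilizing below `κ⁺` would give `κ⁺` distinct elements of
`G^{κ⁺}`, one new element of `G^{β+1}` for each `β`.
-/

open Cardinal

section Relations

variable {F H K : Type*} [Group F] [Group H] [Group K]

/-- Words in the letters `A ⊕ {none}`, with `none` evaluated at `x`. -/
def adjoinEval (A : Set H) (x : H) : FreeGroup (Option A) →* H :=
  FreeGroup.lift fun o => o.elim x Subtype.val

@[simp] lemma adjoinEval_of_none (A : Set H) (x : H) :
    adjoinEval A x (FreeGroup.of none) = x := by
  simp [adjoinEval]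

@[simp] lemma adjoinEval_of_some (A : Set H) (x : H) (a : A) :
    adjoinEval A x (FreeGroup.of (some a)) = a := by
  simp [adjoinEval]

lemma range_adjoinEval (A : Set H) (x : H) :
    (adjoinEval A x).range = Subgroup.closure (A ∪ {x}) := by
  rw [adjoinEval, FreeGroup.range_lift_eq_closure]
  congr 1
  ext h
  constructor
  · rintro ⟨_ | b, rfl⟩
    · exact Or.inr rfl
    · exact Or.inl b.2
  · rintro (hA | rfl)
    · exact ⟨some ⟨h, hA⟩, rfl⟩
    · exact ⟨none, rfl⟩

def relations (A : Set H) (x : H) : Subgroup (FreeGroup (Option A)) :=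
  (adjoinEval A x).ker

/-- The kernel form of `IsSpecialPair`, which, unlike the original, transfers along embeddings. -/
def RelationsDetermine (A : Set H) : Prop :=
  Function.Injective (relations A)

lemma RelationsDetermine.card_le {A : Set H} (hA : RelationsDetermine A) :
    #H ≤ 2 ^ max #A ℵ₀ := by
  have hinj : Function.Injective fun x => (relations A x : Set (FreeGroup (Option A))) :=
    fun x y h => hA (SetLike.coe_injective h)
  calc #H ≤ #(Set (FreeGroup (Option A))) := mk_le_of_injective hinj
    _ = 2 ^ max #(Option A) ℵ₀ := by rw [mk_set, mk_freeGroup]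
    _ ≤ 2 ^ max #A ℵ₀ := by
      refine power_le_power_left two_ne_zero ?_
      rw [mk_option]
      refine max_le ((add_le_max _ _).trans ?_) (le_max_right _ _)
      rw [max_assoc, max_eq_right one_le_aleph0]

noncomputable def rangeEquivOfKerEq (f : F →* H) (g : F →* K) (h : f.ker = g.ker) :
    f.range ≃* g.range :=
  (QuotientGroup.quotientKerEquivRange f).symm.trans
    ((QuotientGroup.quotientMulEquivOfEq h).trans (QuotientGroup.quotientKerEquivRange g))

lemma rangeEquivOfKerEq_apply (f : F →* H) (g : F →* K) (h : f.ker = g.ker) (w : F) :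
    (rangeEquivOfKerEq f g h ⟨f w, w, rfl⟩ : K) = g w := by
  have hw : (QuotientGroup.quotientKerEquivRange f).symm ⟨f w, w, rfl⟩ = (w : F ⧸ f.ker) :=
    (MulEquiv.symm_apply_eq _).2 rfl
  simp only [rangeEquivOfKerEq, MulEquiv.trans_apply, hw]
  rfl

lemma fixesAndSends_of_relations_eq {H : Type u} [Group H] {A : Set H} {x y : H}
    (h : relations A x = relations A y) : FixesAndSends A x y := by
  let φ : Subgroup.closure (A ∪ {x}) ≃* Subgroup.closure (A ∪ {y}) :=
    (MulEquiv.subgroupCongr (range_adjoinEval A x).symm).trans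
      ((rangeEquivOfKerEq _ _ h).trans (MulEquiv.subgroupCongr (range_adjoinEval A y)))
  have hφ : ∀ (g : Subgroup.closure (A ∪ {x})) (w : FreeGroup (Option A)),
      (g : H) = adjoinEval A x w → (φ g : H) = adjoinEval A y w := by
    rintro ⟨g, hg⟩ w rfl
    exact rangeEquivOfKerEq_apply _ _ h w
  refine ⟨φ, fun g hg => ?_, fun g hg => ?_⟩
  · simpa using hφ g (FreeGroup.of (some ⟨g, hg⟩)) (by simp)
  · simpa using hφ g (FreeGroup.of none) (by simpa using hg)

lemma IsSpecialPair.relationsDetermine {H : Type u} [Group H] {A : Set H}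
    (hA : IsSpecialPair H A) : RelationsDetermine A :=
  fun x y h => hA x y (fixesAndSends_of_relations_eq h)

lemma comap_relations_image {M : Type*} [FunLike M H K] [MonoidHomClass M H K] (j : M)
    (hj : Function.Injective j) (A : Set H) (x : H) :
    (relations (j '' A) (j x)).comap
        (FreeGroup.map (Option.map (A.imageFactorization j))) = relations A x := by
  rw [relations, relations, MonoidHom.comap_ker,
    ← MonoidHom.ker_comp_of_injective _ (j : H →* K) hj]
  congr 1
  ext (_ | a) <;> simp [Set.imageFactorization]

lemma RelationsDetermine.eq_of_relations_image_eq {M : Type*} [FunLike M H K]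
    [MonoidHomClass M H K] {A : Set H} (hA : RelationsDetermine A) (j : M)
    (hj : Function.Injective j) {x y : H}
    (h : relations (j '' A) (j x) = relations (j '' A) (j y)) : x = y :=
  hA <| by rw [← comap_relations_image j hj, h, comap_relations_image j hj]

lemma RelationsDetermine.image_mulEquiv {A : Set H} (hA : RelationsDetermine A) (e : H ≃* K) :
    RelationsDetermine (e '' A) := by
  intro x y h
  rw [← e.apply_symm_apply x, ← e.apply_symm_apply y] at h ⊢
  rw [hA.eq_of_relations_image_eq e e.injective h]

end Relations

section MulAut

variable {H : Type*} [Group H]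

lemma MulAut.ker_conj : (MulAut.conj : H →* MulAut H).ker = Subgroup.center H := by
  ext a
  simp only [MonoidHom.mem_ker, MulEquiv.ext_iff, MulAut.conj_apply, MulAut.one_apply,
    Subgroup.mem_center_iff, mul_inv_eq_iff_eq_mul]
  exact forall_congr' fun _ => eq_comm

lemma MulAut.conj_injective_of_center_eq_bot (hH : Subgroup.center H = ⊥) :
    Function.Injective (MulAut.conj : H →* MulAut H) :=
  (MonoidHom.ker_eq_bot_iff _).1 (MulAut.ker_conj.trans hH)

lemma MulAut.conj_apply_eq_mul_conj_mul_inv (f : MulAut H) (a : H) :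
    MulAut.conj (f a) = f * MulAut.conj a * f⁻¹ := by
  ext g
  simp [MulAut.conj_apply, MulAut.mul_apply, MulAut.inv_def]

lemma MulAut.center_eq_bot (hH : Subgroup.center H = ⊥) : Subgroup.center (MulAut H) = ⊥ := by
  refine (Subgroup.eq_bot_iff_forall _).2 fun f hf => MulEquiv.ext fun a => ?_
  apply MulAut.conj_injective_of_center_eq_bot hH
  rw [MulAut.conj_apply_eq_mul_conj_mul_inv, ← Subgroup.mem_center_iff.1 hf, mul_inv_cancel_right]
  rfl

lemma relations_apply_of_forall_mem_eq (σ : H →* H) (hσ : Function.Injective σ) {A : Set H}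
    (hA : ∀ a ∈ A, σ a = a) (x : H) : relations A (σ x) = relations A x := by
  rw [relations, relations, ← MonoidHom.ker_comp_of_injective (adjoinEval A x) σ hσ]
  congr 1
  ext (_ | a) <;> simp [hA]

lemma RelationsDetermine.mulAut_ext {A : Set H} (hA : RelationsDetermine A) {f g : MulAut H}
    (h : ∀ a ∈ A, f a = g a) : f = g := by
  refine MulEquiv.ext fun x => ?_
  have hσ : ∀ a ∈ A, (f⁻¹ * g) a = a := fun a ha => by
    rw [MulAut.mul_apply, ← h a ha, MulAut.inv_apply_self]
  have := hA (relations_apply_of_forall_mem_eq (f⁻¹ * g).toMonoidHom (f⁻¹ * g).injective hσ x)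
  simpa using congrArg f this.symm

/-- Substitutes `none * conj a * none⁻¹` for the extra letter `none`; evaluated at `f`, this is
`conj (f a)`. -/
def conjSubst (A : Set H) (a : A) :
    FreeGroup (Option A) →* FreeGroup (Option (MulAut.conj '' A)) :=
  FreeGroup.lift fun o => o.elim
    (.of none * .of (some (A.imageFactorization MulAut.conj a)) * (.of none)⁻¹)
    (fun b => .of (some (A.imageFactorization MulAut.conj b)))

lemma comap_relations_conj_image (hH : Subgroup.center H = ⊥) (A : Set H) (a : A)
    (f : MulAut H) :
    (relations (MulAut.conj '' A) f).comap (conjSubst A a) = relations A (f a) := by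
  rw [relations, relations, MonoidHom.comap_ker,
    ← MonoidHom.ker_comp_of_injective _ _ (MulAut.conj_injective_of_center_eq_bot hH)]
  congr 1
  ext (_ | b) <;> simp [conjSubst, Set.imageFactorization, MulAut.conj_apply_eq_mul_conj_mul_inv]

lemma RelationsDetermine.image_conj (hH : Subgroup.center H = ⊥) {A : Set H}
    (hA : RelationsDetermine A) : RelationsDetermine (MulAut.conj '' A) := by
  refine fun f g h => hA.mulAut_ext fun a ha => hA ?_
  rw [← comap_relations_conj_image hH A ⟨a, ha⟩, h, comap_relations_conj_image hH]

end MulAut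

lemma Subgroup.center_eq_bot_of_mulEquiv {H K : Type*} [Group H] [Group K] (e : H ≃* K)
    (hK : Subgroup.center K = ⊥) : Subgroup.center H = ⊥ := by
  refine (Subgroup.eq_bot_iff_forall _).2 fun z hz => e.injective ?_
  rw [map_one, ← Subgroup.mem_bot, ← hK]
  exact MulEquivClass.apply_mem_center e hz

namespace AutTower

variable {G : Type u} [Group G] (T : AutTower G)

lemma map_embed {o₁ o₂ : Ordinal.{u}} (h : o₁ ≤ o₂) (g : G) :
    T.map h (T.embed o₁ g) = T.embed o₂ g :=
  T.map_comp _ _ _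

lemma embed_zero (g : G) : T.embed 0 g = T.emb0 g :=
  T.map_id 0 _

lemma succIso_embed_add_one (o : Ordinal.{u}) (g : G) :
    T.succIso o (T.embed (o + 1) g) = MulAut.conj (T.embed o g) := by
  rw [← T.map_embed le_self_add, T.succIso_map]

lemma exists_map_eq_map_eq {o : Ordinal.{u}} (ho : Order.IsSuccLimit o) (x y : T.Stage o) :
    ∃ (β : Ordinal.{u}) (hβ : β < o) (x' y' : T.Stage β),
      T.map hβ.le x' = x ∧ T.map hβ.le y' = y := by
  obtain ⟨β₁, hβ₁, x₁, rfl⟩ := T.limit_covers o ho x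
  obtain ⟨β₂, hβ₂, y₂, rfl⟩ := T.limit_covers o ho y
  refine ⟨max β₁ β₂, max_lt hβ₁ hβ₂, T.map (le_max_left _ _) x₁, T.map (le_max_right _ _) y₂,
    ?_, ?_⟩ <;> rw [T.map_comp]

lemma center_stage_eq_bot (hG : Subgroup.center G = ⊥) (o : Ordinal.{u}) :
    Subgroup.center (T.Stage o) = ⊥ := by
  induction o using Ordinal.limitRecOn with
  | zero => exact Subgroup.center_eq_bot_of_mulEquiv T.emb0.symm hG
  | add_one o ih =>
    exact Subgroup.center_eq_bot_of_mulEquiv (T.succIso o) (MulAut.center_eq_bot ih)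
  | limit o ho ih =>
    refine (Subgroup.eq_bot_iff_forall _).2 fun z hz => ?_
    obtain ⟨β, hβ, z, rfl⟩ := T.limit_covers o ho z
    have hz' : z ∈ Subgroup.center (T.Stage β) :=
      Subgroup.mem_center_iff.2 fun w => T.map_injective hβ.le <| by
        rw [map_mul, map_mul, Subgroup.mem_center_iff.1 hz]
    rw [ih β hβ, Subgroup.mem_bot] at hz'
    rw [hz', map_one]

lemma relationsDetermine_stage (hG : Subgroup.center G = ⊥) {A : Set G}
    (hA : RelationsDetermine A) (o : Ordinal.{u}) : RelationsDetermine (T.embed o '' A) := by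
  induction o using Ordinal.limitRecOn with
  | zero => simpa only [T.embed_zero] using hA.image_mulEquiv T.emb0
  | add_one o ih =>
    have := (ih.image_conj (T.center_stage_eq_bot hG o)).image_mulEquiv (T.succIso o).symm
    simpa only [Set.image_image, ← T.succIso_embed_add_one, MulEquiv.symm_apply_apply] using this
  | limit o ho ih =>
    intro x y h
    obtain ⟨β, hβ, x, y, rfl, rfl⟩ := T.exists_map_eq_map_eq ho x y
    have hA' : T.map hβ.le '' (T.embed β '' A) = T.embed o '' A := by
      simp only [Set.image_image, T.map_embed]
    rw [← hA'] at h
    rw [(ih β hβ).eq_of_relations_image_eq (T.map hβ.le) (T.map_injective hβ.le) h]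

lemma card_le_card_stage {o : Ordinal.{u}} (h : ∀ β < o, ¬ T.StabilizesAt β) :
    o.card ≤ #(T.Stage o) := by
  have hnew : ∀ β < o, ∃ x : T.Stage (β + 1), x ∉ Set.range (T.map le_self_add) := by
    simpa [StabilizesAt, Function.Surjective] using h
  choose x hx using hnew
  let f : Set.Iio o → T.Stage o := fun β => T.map (Order.add_one_le_of_lt β.2) (x β β.2)
  have hf : Function.Injective f := by
    refine Function.Injective.of_lt_imp_ne fun β γ hβγ hf => hx γ γ.2
      ⟨T.map (Order.add_one_le_of_lt hβγ) (x β β.2),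
        T.map_injective (Order.add_one_le_of_lt γ.2) ?_⟩
    simp only [f] at hf
    rw [T.map_comp, T.map_comp, hf]
  rw [← mk_toType]
  exact mk_le_of_injective (hf.comp Ordinal.ToType.mk.symm.injective)

end AutTower

/-- If `G` is centerless and `(G, A)` is a special pair, then the automorphism tower
of `G` stabilizes and `τ_G < (2^{max(|A|, ℵ₀)})⁺`. -/
theorem autTower_stabilizes_of_specialPair {G : Type u} [Group G]
    (hG : Subgroup.center G = ⊥) (A : Set G) (hspec : IsSpecialPair G A)
    (T : AutTower G) :
    ∃ α : Ordinal.{u},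
      α < (Order.succ ((2 : Cardinal.{u}) ^ (max (Cardinal.mk ↥A) Cardinal.aleph0))).ord ∧
      T.StabilizesAt α := by
  have hA := hspec.relationsDetermine
  have hcard (o : Ordinal.{u}) : #(T.Stage o) ≤ 2 ^ max #A ℵ₀ :=
    (T.relationsDetermine_stage hG hA o).card_le.trans
      (power_le_power_left two_ne_zero (max_le_max_right _ mk_image_le))
  by_contra! h
  have := (T.card_le_card_stage h).trans (hcard _)
  rw [card_ord] at this
  exact (Order.lt_succ _).not_ge this
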